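/- Let φ : ℝ → ℂ be a Schwartz function. Then there is a constant C > 0 such that for every A ∈ ℝ, ∫_ℝ |φ(τ)| / ⟨τ + A⟩ dτ ≤ C / ⟨A⟩. -/
import Mathlib


/-- The Japanese bracket `⟨x⟩ = (1 + x²)^{1/2}`. -/
noncomputable def jb (x : ℝ) : ℝ := Real.sqrt (1 + x ^ 2)

lemma jb_pos (x : ℝ) : 0 < jb x := Real.sqrt_pos.2 (by positivity)

lemma one_le_jb (x : ℝ) : 1 ≤ jb x := by
  rw [show (1:ℝ) = Real.sqrt 1 by simp]
  exact Real.sqrt_le_sqrt (by nlinarith [sq_nonneg x])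

lemma jb_le (x : ℝ) : jb x ≤ 1 + |x| := by
  rw [jb, show (1:ℝ) + |x| = Real.sqrt ((1 + |x|)^2) from
    (Real.sqrt_sq (by positivity)).symm]
  exact Real.sqrt_le_sqrt (by nlinarith [abs_nonneg x, sq_abs x])

/-- Peetre inequality. -/
lemma peetre (τ A : ℝ) : jb A ≤ Real.sqrt 2 * (jb (τ + A) * jb τ) := by
  have h : Real.sqrt 2 * (jb (τ + A) * jb τ) = Real.sqrt (2 * ((1 + (τ+A)^2) * (1 + τ^2))) := by
    rw [jb, jb, ← Real.sqrt_mul (by positivity), ← Real.sqrt_mul (by norm_num)]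
  rw [h, jb]
  apply Real.sqrt_le_sqrt
  nlinarith [sq_nonneg (τ*(τ+A)), sq_nonneg (τ+(τ+A)), sq_nonneg τ, sq_nonneg (τ+A)]

/-- For a Schwartz function `φ`, there is `C > 0` with
`∫ |φ(τ)| / ⟨τ + A⟩ dτ ≤ C / ⟨A⟩` uniformly in `A`. -/
theorem stmt4 (φ : SchwartzMap ℝ ℂ) :
    ∃ C : ℝ, 0 < C ∧ ∀ A : ℝ,
      (∫ τ : ℝ, ‖φ τ‖ / jb (τ + A)) ≤ C / jb A := by
  have hint : MeasureTheory.Integrable (fun τ : ℝ => ‖φ τ‖ * jb τ) := by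
    have h0 := φ.integrable_pow_mul (MeasureTheory.volume) 0
    have h1 := φ.integrable_pow_mul (MeasureTheory.volume) 1
    simp only [pow_zero, pow_one, one_mul] at h0 h1
    have hc : Continuous fun τ : ℝ => ‖φ τ‖ * jb τ :=
      φ.continuous.norm.mul (Real.continuous_sqrt.comp (by continuity))
    apply ((h0.add h1).mono' hc.aestronglyMeasurable)
    filter_upwards with τ
    have hb := jb_le τ
    have h1n : ‖τ‖ = |τ| := rfl
    rw [Real.norm_eq_abs, abs_of_nonneg (mul_nonneg (norm_nonneg _) (jb_pos τ).le)]
    have : ‖φ τ‖ * jb τ ≤ ‖φ τ‖ * (1 + |τ|) := by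
      exact mul_le_mul_of_nonneg_left hb (norm_nonneg _)
    calc ‖φ τ‖ * jb τ ≤ ‖φ τ‖ * (1 + |τ|) := this
      _ = ‖φ τ‖ + |τ| * ‖φ τ‖ := by ring
      _ ≤ ‖φ τ‖ + ‖τ‖ * ‖φ τ‖ := by rw [h1n]
  set I := ∫ τ : ℝ, ‖φ τ‖ * jb τ with hI
  have hI0 : 0 ≤ I := MeasureTheory.integral_nonneg fun τ => mul_nonneg (norm_nonneg _) (jb_pos τ).le
  refine ⟨Real.sqrt 2 * I + 1, by positivity, fun A => ?_⟩
  have hjA := jb_pos A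
  have hpt : ∀ τ : ℝ, ‖φ τ‖ / jb (τ + A) ≤ (Real.sqrt 2 / jb A) * (‖φ τ‖ * jb τ) := by
    intro τ
    have h1 := peetre τ A
    have h2 := jb_pos (τ + A)
    have h3 := jb_pos τ
    rw [div_le_iff₀ h2, div_mul_eq_mul_div, div_mul_eq_mul_div, le_div_iff₀ hjA]
    calc ‖φ τ‖ * jb A ≤ ‖φ τ‖ * (Real.sqrt 2 * (jb (τ + A) * jb τ)) :=
          mul_le_mul_of_nonneg_left h1 (norm_nonneg _)
      _ = Real.sqrt 2 * (‖φ τ‖ * jb τ) * jb (τ + A) := by ring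
  have hbound : (∫ τ : ℝ, ‖φ τ‖ / jb (τ + A)) ≤
      ∫ τ : ℝ, (Real.sqrt 2 / jb A) * (‖φ τ‖ * jb τ) := by
    apply MeasureTheory.integral_mono_of_nonneg
    · filter_upwards with τ; exact div_nonneg (norm_nonneg _) (jb_pos _).le
    · exact hint.const_mul _
    · filter_upwards with τ; exact hpt τ
  rw [MeasureTheory.integral_const_mul] at hbound
  calc (∫ τ : ℝ, ‖φ τ‖ / jb (τ + A)) ≤ Real.sqrt 2 / jb A * I := hbound
    _ = Real.sqrt 2 * I / jb A := by ring
    _ ≤ (Real.sqrt 2 * I + 1) / jb A := by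
        gcongr; linarith
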